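/- In the Laurent polynomial ring ℂ[x, x^{−1}] set f̃ = x^{−2} + 2x^{−1} + 1, g̃ = −2·(x^{−3} + 2x^{−2} + x^{−1}), and let D be the derivation (x+1)·d/dx. Then for every integer j ≥ 0, the three elements D^j g̃, f̃·D^j g̃ and g̃·D^j g̃ all lie in x^{−1}·ℂ[x^{−1}], the span of the strictly negative powers of x. (Here f̃ and g̃ arise from f_{1/2}(z) = e^{2z}/(e^z−1)² and g_{1/2} = ∂_z f_{1/2} via the substitution x = e^z − 1, under which ∂_z becomes D.) -/

import Mathlib

noncomputable section

open LaurentPolynomial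

/-- The derivative `d/dx` on the Laurent polynomial ring `ℂ[x, x⁻¹]`:
`xⁿ ↦ n·xⁿ⁻¹`. -/
def lpDeriv (p : LaurentPolynomial ℂ) : LaurentPolynomial ℂ :=
  Finsupp.sum p.coeff fun n a => ((n : ℂ) * a) • T (n - 1)

/-- The ℂ-subspace `x⁻¹·ℂ[x⁻¹]` of `ℂ[x, x⁻¹]` spanned by the strictly negative
powers of `x`. -/
def negPowers : Submodule ℂ (LaurentPolynomial ℂ) :=
  Submodule.span ℂ (Set.range fun m : ℕ => T (-(m + 1) : ℤ))

/-!
Since `D xⁿ = n·(xⁿ + xⁿ⁻¹)` and `xᵐ·xⁿ = xᵐ⁺ⁿ`, checking on monomials shows that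
`x⁻¹·ℂ[x⁻¹]` is `D`-stable and closed under products. As `g̃ ∈ x⁻¹·ℂ[x⁻¹]` and
`f̃ ∈ 1 + x⁻¹·ℂ[x⁻¹]`, all three elements lie in `x⁻¹·ℂ[x⁻¹]`.
-/

def lpDerivₗ : LaurentPolynomial ℂ →ₗ[ℂ] LaurentPolynomial ℂ where
  toFun := lpDeriv
  map_add' p q := Finsupp.sum_add_index' (by simp) fun n a b => by rw [mul_add, add_smul]
  map_smul' c p := by
    simp only [lpDeriv, AddMonoidAlgebra.coeff_smul, RingHom.id_apply]
    rw [Finsupp.sum_smul_index' (by simp), Finsupp.smul_sum]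
    simp only [smul_eq_mul, smul_smul, mul_left_comm]

lemma lpDeriv_T (n : ℤ) : lpDeriv (T n) = (n : ℂ) • T (n - 1) := by
  rw [lpDeriv, T, AddMonoidAlgebra.coeff_single, Finsupp.sum_single_index (by simp), mul_one]

lemma T_mem_negPowers {n : ℤ} (hn : n < 0) : T n ∈ negPowers :=
  Submodule.subset_span ⟨(-n - 1).toNat, by dsimp only; congr 1; omega⟩

lemma map_mem_negPowers (L : LaurentPolynomial ℂ →ₗ[ℂ] LaurentPolynomial ℂ)
    (hL : ∀ n : ℤ, n < 0 → L (T n) ∈ negPowers) {p : LaurentPolynomial ℂ}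
    (hp : p ∈ negPowers) : L p ∈ negPowers :=
  (Submodule.span_le (p := negPowers.comap L)).mpr
    (by rintro _ ⟨m, rfl⟩; exact hL _ (by omega)) hp

lemma mul_mem_negPowers {p q : LaurentPolynomial ℂ} (hp : p ∈ negPowers)
    (hq : q ∈ negPowers) : p * q ∈ negPowers := by
  refine map_mem_negPowers (LinearMap.mulRight ℂ q) (fun n hn => ?_) hp
  refine map_mem_negPowers (LinearMap.mulLeft ℂ (T n)) (fun m hm => ?_) hq
  rw [LinearMap.mulLeft_apply, ← T_add]
  exact T_mem_negPowers (by omega)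

lemma mapsTo_x_add_one_mul_lpDeriv_negPowers :
    Set.MapsTo (fun p => (T 1 + 1) * lpDeriv p) negPowers negPowers := by
  refine fun p hp => map_mem_negPowers (LinearMap.mulLeft ℂ (T 1 + 1) ∘ₗ lpDerivₗ)
    (fun n hn => ?_) hp
  have hDT : (T 1 + 1) * lpDeriv (T n) = (n : ℂ) • (T n + T (n - 1)) := by
    rw [lpDeriv_T, mul_smul_comm, add_mul, one_mul, ← T_add, add_sub_cancel]
  change (T 1 + 1) * lpDeriv (T n) ∈ negPowers
  rw [hDT]
  exact Submodule.smul_mem _ _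
    (add_mem (T_mem_negPowers hn) (T_mem_negPowers (n := n - 1) (by omega)))

/-- In `ℂ[x, x⁻¹]` set `f̃ = x⁻² + 2x⁻¹ + 1`, `g̃ = −2·(x⁻³ + 2x⁻² + x⁻¹)` (arising from
`f_{1/2}(z) = e^{2z}/(eᶻ−1)²` and `g_{1/2} = ∂_z f_{1/2}` via `x = eᶻ − 1`), and let `D`
be the derivation `(x+1)·d/dx`.  Then for every `j ≥ 0` the elements `Dʲg̃`, `f̃·Dʲg̃`
and `g̃·Dʲg̃` all lie in `x⁻¹·ℂ[x⁻¹]`. -/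
theorem laurent_poly_span_closure_half (j : ℕ) :
    (fun p => (T 1 + 1) * lpDeriv p)^[j]
        ((-2 : ℂ) • (T (-3 : ℤ) + 2 • T (-2 : ℤ) + T (-1 : ℤ))) ∈ negPowers ∧
      (T (-2 : ℤ) + 2 • T (-1 : ℤ) + 1) *
          (fun p => (T 1 + 1) * lpDeriv p)^[j]
            ((-2 : ℂ) • (T (-3 : ℤ) + 2 • T (-2 : ℤ) + T (-1 : ℤ))) ∈ negPowers ∧
      ((-2 : ℂ) • (T (-3 : ℤ) + 2 • T (-2 : ℤ) + T (-1 : ℤ))) *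
          (fun p => (T 1 + 1) * lpDeriv p)^[j]
            ((-2 : ℂ) • (T (-3 : ℤ) + 2 • T (-2 : ℤ) + T (-1 : ℤ))) ∈ negPowers := by
  have hg : (-2 : ℂ) • (T (-3 : ℤ) + 2 • T (-2 : ℤ) + T (-1 : ℤ)) ∈ negPowers :=
    Submodule.smul_mem _ _ <| add_mem (add_mem (T_mem_negPowers (by norm_num))
      (nsmul_mem (T_mem_negPowers (by norm_num)) 2)) (T_mem_negPowers (by norm_num))
  have hf : T (-2 : ℤ) + 2 • T (-1 : ℤ) ∈ negPowers :=
    add_mem (T_mem_negPowers (by norm_num)) (nsmul_mem (T_mem_negPowers (by norm_num)) 2)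
  have hDj := mapsTo_x_add_one_mul_lpDeriv_negPowers.iterate j hg
  refine ⟨hDj, ?_, mul_mem_negPowers hg hDj⟩
  rw [add_mul _ 1, one_mul]
  exact add_mem (mul_mem_negPowers hf hDj) hDj

end
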